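/- Let C be a reduced curve on a smooth projective surface whose singularities all have the same multiplicity m ≥ 2 and are ordinary, with s = #Sing(C) ≥ 1. Then H(C, Sing(C)) = C²/s − m², and the Harbourne constant of C equals min(−1, C² − m², C²/s − m²). -/

import Mathlib

/-!
For `a ≥ 1` the quotient `(C² - a m² - b)/(a + b + c)` is a weighted average of
`C²/a - m²` (weight `a`), `-1` (weight `b`) and `0` (weight `c`). Since `a ↦ C²/a` is
monotone on `[1, s]`, the first value is at least `min (C² - m²) (C²/s - m²)`; for `a = 0`
the quotient is at least `min (-1) (C² - 1)`. The bound is attained at `(a, b, c) = (1, 0, 0)`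
and `(s, 0, 0)`, while `(0, n, 0)` gives `C²/n - 1 → -1`.
-/

open Filter Topology

namespace Harbourne

variable (C2 m : ℝ) (s : ℕ)

noncomputable def quotient (a b c : ℕ) : ℝ := (C2 - a * m ^ 2 - b) / (a + b + c)

def quotients : Set ℝ :=
  {h | ∃ a b c : ℕ, a ≤ s ∧ 0 < a + b + c ∧ h = quotient C2 m a b c}

variable {C2 m s}

theorem mul_le_of_mul_le_of_mul_le {k x y a C : ℝ} (hx : k * x ≤ C) (hy : k * y ≤ C)
    (hxa : x ≤ a) (hay : a ≤ y) : k * a ≤ C := by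
  rcases le_total 0 k with hk | hk <;> nlinarith

theorem le_quotient {L : ℝ} (hm : 1 ≤ m) (hL₁ : L ≤ -1) (hL₂ : L ≤ C2 - m ^ 2)
    (hL₃ : L ≤ C2 / s - m ^ 2) {a b c : ℕ} (ha : a ≤ s) (hN : 0 < a + b + c) :
    L ≤ quotient C2 m a b c := by
  have hN' : (0 : ℝ) < a + b + c := by exact_mod_cast hN
  rw [quotient, le_div_iff₀ hN']
  have hb : (b : ℝ) * (L + 1) ≤ 0 := mul_nonpos_of_nonneg_of_nonpos b.cast_nonneg (by linarith)
  have hc : (c : ℝ) * L ≤ 0 := mul_nonpos_of_nonneg_of_nonpos c.cast_nonneg (by linarith)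
  rcases a.eq_zero_or_pos with rfl | ha₁
  · have hbc : (1 : ℝ) ≤ b + c := by exact_mod_cast (by omega : 1 ≤ b + c)
    have hm₂ : 1 ≤ m ^ 2 := one_le_pow₀ hm
    push_cast
    nlinarith [mul_nonpos_of_nonneg_of_nonpos (sub_nonneg.2 hbc) (by linarith : L + 1 ≤ 0)]
  · have hs : (0 : ℝ) < s := by exact_mod_cast ha₁.trans_le ha
    have hsingular : (m ^ 2 + L) * a ≤ C2 :=
      mul_le_of_mul_le_of_mul_le (x := 1) (y := s) (by linarith)
        ((le_div_iff₀ hs).1 (by linarith))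
        (by exact_mod_cast ha₁) (by exact_mod_cast ha)
    linarith

theorem quotient_self_zero_zero {a : ℕ} (ha : a ≠ 0) :
    quotient C2 m a 0 0 = C2 / a - m ^ 2 := by
  simp only [quotient, Nat.cast_zero, sub_zero, add_zero]
  field_simp

theorem tendsto_quotient_zero_nat_zero :
    Tendsto (fun n : ℕ => quotient C2 m 0 n 0) atTop (𝓝 (-1)) := by
  have hlim := (tendsto_const_div_atTop_nhds_zero_nat C2).sub_const 1
  rw [zero_sub] at hlim
  refine hlim.congr' ((eventually_ne_atTop 0).mono fun n hn => ?_)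
  simp only [quotient, Nat.cast_zero, zero_mul, sub_zero, zero_add, add_zero]
  field_simp

theorem le_neg_one_of_mem_lowerBounds {B : ℝ} (hB : B ∈ lowerBounds (quotients C2 m s)) :
    B ≤ -1 :=
  ge_of_tendsto tendsto_quotient_zero_nat_zero <| (eventually_gt_atTop 0).mono fun n hn =>
    hB ⟨0, n, 0, s.zero_le, by omega, rfl⟩

theorem isGLB_quotients (hm : 1 ≤ m) (hs : 1 ≤ s) :
    IsGLB (quotients C2 m s) (min (-1) (min (C2 - m ^ 2) (C2 / s - m ^ 2))) := by
  refine ⟨?_, fun B hB => le_min (le_neg_one_of_mem_lowerBounds hB) (le_min ?_ ?_)⟩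
  · rintro _ ⟨a, b, c, ha, hN, rfl⟩
    exact le_quotient hm (min_le_left _ _) ((min_le_right _ _).trans (min_le_left _ _))
      ((min_le_right _ _).trans (min_le_right _ _)) ha hN
  · simpa [quotient_self_zero_zero] using hB ⟨1, 0, 0, hs, one_pos, rfl⟩
  · simpa [quotient_self_zero_zero (by omega : s ≠ 0)] using
      hB ⟨s, 0, 0, le_rfl, by omega, rfl⟩

end Harbourne

/-- Let `C` be a reduced curve whose singularities are ordinary, all of the same
multiplicity `m ≥ 2`, with `s ≥ 1` singular points.  Blowing up `a ≤ s` of the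
singular points, `b` further smooth points of `C` and `c` points off `C` gives
the Harbourne quotient `(C² − a m² − b)/(a+b+c)`.  Then
`H(C, Sing C) = C²/s − m²` and the Harbourne constant of `C` (the infimum of all
these quotients) equals `min(−1, C² − m², C²/s − m²)`. -/
theorem harbourne_constant_equimultiple (C2 : ℤ) (m s : ℕ)
    (hm : 2 ≤ m) (hs : 1 ≤ s) :
    ((C2 : ℝ) - (s : ℝ) * (m : ℝ) ^ 2) / (s : ℝ) = (C2 : ℝ) / (s : ℝ) - (m : ℝ) ^ 2 ∧
    IsGLB {h : ℝ | ∃ a b c : ℕ, a ≤ s ∧ 0 < a + b + c ∧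
        h = ((C2 : ℝ) - (a : ℝ) * (m : ℝ) ^ 2 - (b : ℝ)) / ((a : ℝ) + (b : ℝ) + (c : ℝ))}
      (min (-1) (min ((C2 : ℝ) - (m : ℝ) ^ 2) ((C2 : ℝ) / (s : ℝ) - (m : ℝ) ^ 2))) := by
  have hs₀ : (s : ℝ) ≠ 0 := by positivity
  refine ⟨by field_simp, Harbourne.isGLB_quotients ?_ hs⟩
  exact_mod_cast (by omega : 1 ≤ m)
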